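/- Let L be a Lie algebra over a field k, let z ∈ L be a central element (i.e. [z, x] = 0 for all x ∈ L), and let α ∈ k. Define the linear map φ : L ⊗ L → L ⊗ L by φ(x ⊗ y) = α [x,y] ⊗ z + y ⊗ x. Then φ is a Yang–Baxter operator: it satisfies the braid equation φ¹² ∘ φ²³ ∘ φ¹² = φ²³ ∘ φ¹² ∘ φ²³, and it is invertible with inverse given by φ⁻¹(x ⊗ y) = α z ⊗ [x,y] + y ⊗ x. -/

import Mathlib

/-! Since `z` is central, every term in which `z` gets bracketed vanishes, so everything can be
computed on pure tensors. In `φ ∘ ψ` and `ψ ∘ φ` the remaining bracket terms cancel by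
antisymmetry. The two sides of the braid equation on `x ⊗ y ⊗ w` agree except for their
`α² (· ⊗ z ⊗ z)` terms, `⁅⁅x, y⁆, w⁆ + ⁅y, ⁅x, w⁆⁆` against `⁅x, ⁅y, w⁆⁆`: the Jacobi identity. -/

open TensorProduct

/-- The twist map `τ : V ⊗ V → V ⊗ V`, `v ⊗ w ↦ w ⊗ v`. -/
noncomputable def twist (k V : Type*) [Field k] [AddCommGroup V] [Module k V] :
    V ⊗[k] V →ₗ[k] V ⊗[k] V := (TensorProduct.comm k V V).toLinearMap

/-- `R¹² = R ⊗ I` acting on `(V ⊗ V) ⊗ V`. -/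
noncomputable def r12 {k V : Type*} [Field k] [AddCommGroup V] [Module k V]
    (R : V ⊗[k] V →ₗ[k] V ⊗[k] V) :
    (V ⊗[k] V) ⊗[k] V →ₗ[k] (V ⊗[k] V) ⊗[k] V :=
  TensorProduct.map R LinearMap.id

/-- `R²³ = I ⊗ R` acting on `(V ⊗ V) ⊗ V`. -/
noncomputable def r23 {k V : Type*} [Field k] [AddCommGroup V] [Module k V]
    (R : V ⊗[k] V →ₗ[k] V ⊗[k] V) :
    (V ⊗[k] V) ⊗[k] V →ₗ[k] (V ⊗[k] V) ⊗[k] V :=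
  (TensorProduct.assoc k V V V).symm.toLinearMap ∘ₗ
    TensorProduct.map LinearMap.id R ∘ₗ (TensorProduct.assoc k V V V).toLinearMap

/-- `I ⊗ τ` acting on `(V ⊗ V) ⊗ V`. -/
noncomputable def iTauI (k V : Type*) [Field k] [AddCommGroup V] [Module k V] :
    (V ⊗[k] V) ⊗[k] V →ₗ[k] (V ⊗[k] V) ⊗[k] V :=
  (TensorProduct.assoc k V V V).symm.toLinearMap ∘ₗ
    TensorProduct.map LinearMap.id (twist k V) ∘ₗ (TensorProduct.assoc k V V V).toLinearMap

/-- `R¹³ = (I ⊗ τ)(R ⊗ I)(I ⊗ τ)` acting on `(V ⊗ V) ⊗ V`. -/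
noncomputable def r13 {k V : Type*} [Field k] [AddCommGroup V] [Module k V]
    (R : V ⊗[k] V →ₗ[k] V ⊗[k] V) :
    (V ⊗[k] V) ⊗[k] V →ₗ[k] (V ⊗[k] V) ⊗[k] V :=
  iTauI k V ∘ₗ r12 R ∘ₗ iTauI k V

/-- The Lie bracket of `L` as a linear map `L ⊗ L → L`, `x ⊗ y ↦ ⁅x, y⁆`. -/
noncomputable def brLift (k L : Type*) [Field k] [LieRing L] [LieAlgebra k L] :
    L ⊗[k] L →ₗ[k] L :=
  TensorProduct.lift (LinearMap.mk₂ k (fun x y => ⁅x, y⁆)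
    (fun x y z => add_lie x y z) (fun c x y => smul_lie c x y)
    (fun x y z => lie_add x y z) (fun c x y => lie_smul c x y))

/-- The braid equation `R¹² R²³ R¹² = R²³ R¹² R²³`. -/
noncomputable def BraidEq {k V : Type*} [Field k] [AddCommGroup V] [Module k V]
    (R : V ⊗[k] V →ₗ[k] V ⊗[k] V) : Prop :=
  r12 R ∘ₗ r23 R ∘ₗ r12 R = r23 R ∘ₗ r12 R ∘ₗ r23 R

section TensorLegs

variable {k V : Type*} [Field k] [AddCommGroup V] [Module k V]

theorem r12_tmul (R : V ⊗[k] V →ₗ[k] V ⊗[k] V) (x y w : V) :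
    r12 R ((x ⊗ₜ y) ⊗ₜ w) = R (x ⊗ₜ y) ⊗ₜ w := rfl

theorem r23_tmul (R : V ⊗[k] V →ₗ[k] V ⊗[k] V) (x y w : V) :
    r23 R ((x ⊗ₜ y) ⊗ₜ w) = (TensorProduct.assoc k V V V).symm (x ⊗ₜ R (y ⊗ₜ w)) := rfl

end TensorLegs

section LieBraiding

variable {k L : Type*} [Field k] [LieRing L] [LieAlgebra k L]

theorem lie_eq_zero_of_central {z : L} (hz : ∀ x : L, ⁅z, x⁆ = 0) (x : L) : ⁅x, z⁆ = 0 := by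
  rw [← lie_skew, hz, neg_zero]

variable (k) in
noncomputable def lieBraiding (z : L) (α : k) : L ⊗[k] L →ₗ[k] L ⊗[k] L :=
  α • ((TensorProduct.mk k L L).flip z ∘ₗ brLift k L) + twist k L

variable (k) in
noncomputable def lieBraidingInv (z : L) (α : k) : L ⊗[k] L →ₗ[k] L ⊗[k] L :=
  α • (TensorProduct.mk k L L z ∘ₗ brLift k L) + twist k L

variable {z : L} (α : k)

@[simp]
theorem lieBraiding_tmul (x y : L) :
    lieBraiding k z α (x ⊗ₜ y) = α • ⁅x, y⁆ ⊗ₜ z + y ⊗ₜ x := rfl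

@[simp]
theorem lieBraidingInv_tmul (x y : L) :
    lieBraidingInv k z α (x ⊗ₜ y) = α • z ⊗ₜ ⁅x, y⁆ + y ⊗ₜ x := rfl

theorem lieBraiding_comp_lieBraidingInv (hz : ∀ x : L, ⁅z, x⁆ = 0) :
    lieBraiding k z α ∘ₗ lieBraidingInv k z α = LinearMap.id := by
  refine TensorProduct.ext' fun x y => ?_
  simp only [LinearMap.comp_apply, lieBraidingInv_tmul, map_add, map_smul, lieBraiding_tmul, hz,
    LinearMap.id_apply]
  rw [← lie_skew x y]
  simp only [zero_tmul, smul_zero, zero_add, neg_tmul, smul_neg]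
  abel

theorem lieBraidingInv_comp_lieBraiding (hz : ∀ x : L, ⁅z, x⁆ = 0) :
    lieBraidingInv k z α ∘ₗ lieBraiding k z α = LinearMap.id := by
  refine TensorProduct.ext' fun x y => ?_
  simp only [LinearMap.comp_apply, lieBraidingInv_tmul, map_add, map_smul, lieBraiding_tmul,
    lie_eq_zero_of_central hz, LinearMap.id_apply]
  rw [← lie_skew x y]
  simp only [tmul_zero, smul_zero, zero_add, tmul_neg, smul_neg]
  abel

theorem lieBraiding_braidEq (hz : ∀ x : L, ⁅z, x⁆ = 0) : BraidEq (lieBraiding k z α) := by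
  refine TensorProduct.ext_threefold fun x y w => ?_
  simp only [LinearMap.comp_apply, r12_tmul, r23_tmul, lieBraiding_tmul, map_add, map_smul,
    add_tmul, tmul_add, ← smul_tmul', tmul_smul, assoc_symm_tmul, hz, lie_eq_zero_of_central hz,
    zero_tmul, smul_zero, zero_add]
  rw [leibniz_lie x y w, add_tmul, add_tmul]
  module

end LieBraiding

/-- **Theorem (Majid).** For a Lie algebra `L` over `k`, a central element `z ∈ L` and
`α ∈ k`, the map `φ(x ⊗ y) = α ⁅x,y⁆ ⊗ z + y ⊗ x` is a Yang–Baxter operator: it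
satisfies the braid equation and is invertible with inverse
`φ⁻¹(x ⊗ y) = α z ⊗ ⁅x,y⁆ + y ⊗ x`. -/
theorem lie_yang_baxter_operator {k L : Type*} [Field k] [LieRing L] [LieAlgebra k L]
    (z : L) (hz : ∀ x : L, ⁅z, x⁆ = 0) (α : k) :
    let φ : L ⊗[k] L →ₗ[k] L ⊗[k] L :=
      α • (((TensorProduct.mk k L L).flip z) ∘ₗ brLift k L) + twist k L
    let ψ : L ⊗[k] L →ₗ[k] L ⊗[k] L :=
      α • ((TensorProduct.mk k L L z) ∘ₗ brLift k L) + twist k L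
    BraidEq φ ∧ φ ∘ₗ ψ = LinearMap.id ∧ ψ ∘ₗ φ = LinearMap.id :=
  ⟨lieBraiding_braidEq α hz, lieBraiding_comp_lieBraidingInv α hz,
    lieBraidingInv_comp_lieBraiding α hz⟩
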